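/- arXiv:2505.16126 — 6 statements merged into one kernel-verified Lean document; each statement's English description precedes it below -/
import Mathlib

section
/- Let f : ℝ → ℝ be a nonnegative differentiable function whose derivative f′ is L-Lipschitz for some L > 0. Then for every x ∈ ℝ, (f′(x))² ≤ 2·L·f(x). -/
/-! Evaluating the quadratic upper bound of the descent lemma at the gradient step
`y = x - f'(x) / L` gives `0 ≤ f y ≤ f x - f'(x)² / (2L)`. The descent lemma itself holds because
`y ↦ f x + f'(x) (y - x) + L/2 (y - x)² - f y` vanishes at `x`, and the Lipschitz bound on `f'`
makes it nondecreasing to the right of `x` and nonincreasing to the left. -/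

theorem quadratic_upper_bound_of_lipschitz_deriv {f : ℝ → ℝ} {L : ℝ} (hdiff : Differentiable ℝ f)
    (hlip : ∀ x y : ℝ, |deriv f x - deriv f y| ≤ L * |x - y|) (x y : ℝ) :
    f y ≤ f x + deriv f x * (y - x) + L / 2 * (y - x) ^ 2 := by
  set g : ℝ → ℝ := fun y ↦ f x + deriv f x * (y - x) + L / 2 * (y - x) ^ 2 - f y
  have hg : ∀ y, HasDerivAt g (deriv f x + L * (y - x) - deriv f y) y := fun y ↦ by
    have hlin := ((hasDerivAt_id' y).sub_const x).const_mul (deriv f x) |>.const_add (f x)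
    have hquad := (((hasDerivAt_id' y).sub_const x).pow 2).const_mul (L / 2)
    exact (hlin.add hquad).sub (hdiff y).hasDerivAt |>.congr_deriv (by ring)
  have hg_cont : Continuous g := continuous_iff_continuousAt.2 fun y ↦ (hg y).continuousAt
  suffices g x ≤ g y by simpa [g] using this
  rcases le_total x y with hxy | hyx
  · refine monotoneOn_of_hasDerivWithinAt_nonneg (convex_Ici x) hg_cont.continuousOn
      (fun z _ ↦ (hg z).hasDerivWithinAt) (fun z hz ↦ ?_) Set.self_mem_Ici hxy hxy
    rw [interior_Ici] at hz
    have hslope := (abs_le.1 (hlip z x)).2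
    rw [abs_of_pos (sub_pos.2 hz)] at hslope
    linarith
  · refine antitoneOn_of_hasDerivWithinAt_nonpos (convex_Iic x) hg_cont.continuousOn
      (fun z _ ↦ (hg z).hasDerivWithinAt) (fun z hz ↦ ?_) hyx Set.self_mem_Iic hyx
    rw [interior_Iic] at hz
    have hslope := (abs_le.1 (hlip z x)).1
    rw [abs_of_neg (sub_neg.2 hz)] at hslope
    linarith

/-- A nonnegative differentiable function on `ℝ` with `L`-Lipschitz derivative satisfies
`(f'(x))² ≤ 2 L f(x)` everywhere. -/
theorem stmt_1 (f : ℝ → ℝ) (L : ℝ) (hL : 0 < L)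
    (hnonneg : ∀ x, 0 ≤ f x)
    (hdiff : Differentiable ℝ f)
    (hlip : ∀ x y : ℝ, |deriv f x - deriv f y| ≤ L * |x - y|) :
    ∀ x : ℝ, (deriv f x) ^ 2 ≤ 2 * L * f x := by
  intro x
  have hstep := quadratic_upper_bound_of_lipschitz_deriv hdiff hlip x (x - deriv f x / L)
  have hdecrease : f x + deriv f x * (x - deriv f x / L - x) + L / 2 * (x - deriv f x / L - x) ^ 2
      = f x - deriv f x ^ 2 / (2 * L) := by
    field_simp
    ring
  have hbound : deriv f x ^ 2 / (2 * L) ≤ f x := by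
    linarith [hnonneg (x - deriv f x / L)]
  rwa [div_le_iff₀ (by positivity), mul_comm] at hbound
end

section
/- Let E be a finite nonempty set with n = |E| elements, let J : E → ℝ, and let α_min ∈ ℝ with α_min ≤ 1/n. Define the feasible set 𝒜 = { α : E → ℝ | ∑_{e ∈ E} α(e) = 1 and α(e) ≥ α_min for all e ∈ E }. Then the maximum of α ↦ ∑_{e ∈ E} α(e)·J(e) over 𝒜 is attained, and its value equals (1 − α_min·n)·max_{e ∈ E} J(e) + α_min·∑_{e ∈ E} J(e). -/
/-!
For weights `α ≥ α_min` summing to one, write `α = α_min + (α - α_min)`: the uniform part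
contributes `α_min · ∑ J`, and the excess `α - α_min` is a nonnegative weight of total mass
`1 - α_min n`, whose contribution is at most `(1 - α_min n) · max J`. Putting the whole excess on a
maximiser of `J` attains the bound; it is feasible exactly when `α_min ≤ 1 / n`.
-/

open Finset

theorem Finset.sum_mul_le_sum_mul_sup' {ι : Type*} {s : Finset ι} (hs : s.Nonempty)
    {w : ι → ℝ} (hw : ∀ i ∈ s, 0 ≤ w i) (f : ι → ℝ) :
    ∑ i ∈ s, w i * f i ≤ (∑ i ∈ s, w i) * s.sup' hs f := by
  rw [sum_mul]
  exact sum_le_sum fun i hi => mul_le_mul_of_nonneg_left (le_sup' f hi) (hw i hi)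

theorem Finset.sum_mul_le_of_sum_eq_one_of_forall_le {ι : Type*} {s : Finset ι}
    (hs : s.Nonempty) {α : ι → ℝ} {m : ℝ} (hsum : ∑ i ∈ s, α i = 1) (hge : ∀ i ∈ s, m ≤ α i)
    (f : ι → ℝ) :
    ∑ i ∈ s, α i * f i ≤ (1 - m * #s) * s.sup' hs f + m * ∑ i ∈ s, f i := by
  have hexcess : ∑ i ∈ s, (α i - m) = 1 - m * #s := by
    rw [sum_sub_distrib, hsum, sum_const, nsmul_eq_mul, mul_comm]
  calc ∑ i ∈ s, α i * f i = ∑ i ∈ s, (α i - m) * f i + m * ∑ i ∈ s, f i := by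
        rw [mul_sum, ← sum_add_distrib]
        exact sum_congr rfl fun i _ => by ring
    _ ≤ (1 - m * #s) * s.sup' hs f + m * ∑ i ∈ s, f i := by
        rw [← hexcess]
        gcongr
        exact sum_mul_le_sum_mul_sup' hs (fun i hi => sub_nonneg.2 (hge i hi)) f

section CornerWeight

variable {E : Type*} [Fintype E] [DecidableEq E]

def cornerWeight (m : ℝ) (e₀ : E) : E → ℝ :=
  fun e => m + Pi.single (M := fun _ => ℝ) e₀ (1 - m * Fintype.card E) e

theorem sum_cornerWeight (m : ℝ) (e₀ : E) : ∑ e, cornerWeight m e₀ e = 1 := by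
  simp only [cornerWeight, sum_add_distrib, sum_const, card_univ, nsmul_eq_mul,
    sum_pi_single', mem_univ, if_true]
  ring

theorem le_cornerWeight {m : ℝ} (hm : m * Fintype.card E ≤ 1) (e₀ e : E) :
    m ≤ cornerWeight m e₀ e := by
  rw [cornerWeight, le_add_iff_nonneg_right]
  exact (Pi.single_nonneg.2 (sub_nonneg.2 hm) : (0 : E → ℝ) ≤ _) e

theorem sum_cornerWeight_mul (m : ℝ) (e₀ : E) (f : E → ℝ) :
    ∑ e, cornerWeight m e₀ e * f e = (1 - m * Fintype.card E) * f e₀ + m * ∑ e, f e := by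
  simp only [cornerWeight, add_mul, sum_add_distrib, ← mul_sum, ← Pi.single_mul_left_apply,
    sum_pi_single', mem_univ, if_true]
  ring

end CornerWeight

/-- Closed form of the mm-IRMv1 penalty: the maximum of `α ↦ ∑ α e * J e` over the
extrapolation weights `𝒜 = {α | ∑ α e = 1, α e ≥ α_min}` is attained and equals
`(1 − α_min n) · max J + α_min · ∑ J`. -/
theorem stmt_4 {E : Type*} [Fintype E] [Nonempty E]
    (n : ℕ) (hn : n = Fintype.card E)
    (J : E → ℝ) (αmin : ℝ) (hαmin : αmin ≤ 1 / (n : ℝ)) :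
    IsGreatest
      {v : ℝ | ∃ α : E → ℝ, (∑ e, α e = 1) ∧ (∀ e, αmin ≤ α e) ∧ v = ∑ e, α e * J e}
      ((1 - αmin * (n : ℝ)) * (univ.sup' univ_nonempty J) + αmin * ∑ e, J e) := by
  classical
  subst hn
  have hcard : αmin * Fintype.card E ≤ 1 := by
    rwa [le_div_iff₀ (by exact_mod_cast Fintype.card_pos)] at hαmin
  obtain ⟨e₀, -, hmax⟩ := exists_mem_eq_sup' univ_nonempty J
  refine ⟨⟨cornerWeight αmin e₀, sum_cornerWeight αmin e₀, le_cornerWeight hcard e₀, ?_⟩, ?_⟩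
  · rw [sum_cornerWeight_mul, hmax]
  · rintro v ⟨α, hsum, hge, rfl⟩
    simpa only [card_univ] using
      sum_mul_le_of_sum_eq_one_of_forall_le univ_nonempty hsum (fun e _ => hge e) J
end

section
/- Let E be a finite nonempty set with n = |E| elements, let J : E → ℝ, and let α_min ∈ ℝ. If α : E → ℝ satisfies ∑_{e ∈ E} α(e) = 1 and α(e) ≥ α_min for all e ∈ E, then ∑_{e ∈ E} α(e)·J(e) ≤ (1 − α_min·n)·max_{e ∈ E} J(e) + α_min·∑_{e ∈ E} J(e). -/
/-!
Split each weight as `α e = α_min + (α e - α_min)`. The excess parts are nonnegative and sum to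
`1 - α_min n`, so against them `J` may be replaced by its maximum, while the constant part
contributes exactly `α_min ∑ J`.
-/

open Finset

theorem Finset.sum_mul_le_of_forall_ge_of_forall_le {ι R : Type*} [CommRing R] [PartialOrder R]
    [IsOrderedRing R] (s : Finset ι) (w f : ι → R) (c M : R)
    (hw : ∀ i ∈ s, c ≤ w i) (hf : ∀ i ∈ s, f i ≤ M) :
    ∑ i ∈ s, w i * f i ≤ (∑ i ∈ s, w i - c * #s) * M + c * ∑ i ∈ s, f i := by
  have pointwise : ∀ i ∈ s, w i * f i ≤ (w i - c) * M + c * f i := fun i hi => by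
    have excess_le : (w i - c) * f i ≤ (w i - c) * M :=
      mul_le_mul_of_nonneg_left (hf i hi) (sub_nonneg.mpr (hw i hi))
    linear_combination excess_le
  calc ∑ i ∈ s, w i * f i ≤ ∑ i ∈ s, ((w i - c) * M + c * f i) := sum_le_sum pointwise
    _ = (∑ i ∈ s, w i - c * #s) * M + c * ∑ i ∈ s, f i := by
      rw [sum_add_distrib, ← sum_mul, ← mul_sum, sum_sub_distrib, sum_const, nsmul_eq_mul]
      ring

/-- Upper bound direction of the mm-IRMv1 closed form: any feasible weight vector `α`
(summing to 1 with entries bounded below by `α_min`) satisfies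
`∑ α e * J e ≤ (1 − α_min n) · max J + α_min · ∑ J`. -/
theorem stmt_5 {E : Type*} [Fintype E] [Nonempty E]
    (n : ℕ) (hn : n = Fintype.card E)
    (J : E → ℝ) (αmin : ℝ)
    (α : E → ℝ) (hsum : ∑ e, α e = 1) (hlb : ∀ e, αmin ≤ α e) :
    ∑ e, α e * J e ≤
      (1 - αmin * (n : ℝ)) * (univ.sup' univ_nonempty J) + αmin * ∑ e, J e := by
  have h := sum_mul_le_of_forall_ge_of_forall_le univ α J αmin (univ.sup' univ_nonempty J)
    (fun e _ => hlb e) (fun e he => le_sup' J he)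
  rwa [hsum, card_univ, ← hn] at h
end

section
/- Let E be a finite nonempty set with n = |E| elements, let J : E → ℝ, and let α_min ∈ ℝ with α_min ≤ 1/n. Then there exists α : E → ℝ with ∑_{e ∈ E} α(e) = 1 and α(e) ≥ α_min for all e ∈ E such that ∑_{e ∈ E} α(e)·J(e) = (1 − α_min·n)·max_{e ∈ E} J(e) + α_min·∑_{e ∈ E} J(e). -/
open Finset

section SingleWeights

variable {E R : Type*} [Fintype E] [DecidableEq E] [CommSemiring R]

theorem sum_add_single_mul (c r : R) (e₀ : E) (J : E → R) :
    ∑ e, (c + (Pi.single e₀ r : E → R) e) * J e = r * J e₀ + c * ∑ e, J e := by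
  simp only [add_mul, sum_add_distrib, ← mul_sum, Pi.single_apply, ite_mul, zero_mul,
    sum_ite_eq', mem_univ, if_true]
  ring

theorem sum_add_single (c r : R) (e₀ : E) :
    ∑ e, (c + (Pi.single e₀ r : E → R) e) = r + c * Fintype.card E := by
  simpa using sum_add_single_mul c r e₀ (fun _ => 1)

end SingleWeights

theorem le_add_single {E R : Type*} [DecidableEq E] [AddCommMonoid R] [PartialOrder R]
    [IsOrderedAddMonoid R] {r : R} (hr : 0 ≤ r) (c : R) (e₀ e : E) :
    c ≤ c + (Pi.single e₀ r : E → R) e := by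
  rcases eq_or_ne e e₀ with rfl | h
  · simpa using le_add_of_nonneg_right hr
  · simp [h]

theorem one_sub_mul_nonneg_of_le_one_div {a : ℝ} {n : ℕ} (hn : 0 < n) (ha : a ≤ 1 / n) :
    0 ≤ 1 - a * n := by
  have hn' : (0 : ℝ) < n := by exact_mod_cast hn
  rw [le_div_iff₀ hn'] at ha
  linarith

/-- Attainment direction of the mm-IRMv1 closed form: if `α_min ≤ 1/n`, some feasible
weight vector `α` attains `(1 − α_min n) · max J + α_min · ∑ J`. -/
theorem stmt_6 {E : Type*} [Fintype E] [Nonempty E]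
    (n : ℕ) (hn : n = Fintype.card E)
    (J : E → ℝ) (αmin : ℝ) (hαmin : αmin ≤ 1 / (n : ℝ)) :
    ∃ α : E → ℝ, (∑ e, α e = 1) ∧ (∀ e, αmin ≤ α e) ∧
      ∑ e, α e * J e =
        (1 - αmin * (n : ℝ)) * (univ.sup' univ_nonempty J) + αmin * ∑ e, J e := by
  classical
  obtain ⟨e₀, -, hmax⟩ := exists_mem_eq_sup' univ_nonempty J
  have hrest : 0 ≤ 1 - αmin * n :=
    one_sub_mul_nonneg_of_le_one_div (hn ▸ Fintype.card_pos) hαmin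
  refine ⟨fun e => αmin + (Pi.single e₀ (1 - αmin * n) : E → ℝ) e, ?_,
    le_add_single hrest αmin e₀, ?_⟩
  · rw [sum_add_single, ← hn]
    ring
  · rw [sum_add_single_mul, hmax]
end

section
/- Let d ≥ 1, let e > 0, and let (Ω, 𝔽, P) be a probability space carrying square-integrable real random variables X_1, …, X_d, V_1, …, V_d, U that are pairwise independent, each with mean 0, with Var(X_i) = e² and Var(V_i) = e² for all i and Var(U) = 1. Define Y = ∑_{i=1}^d X_i + U and, for parameter vectors w_inv, w_spu ∈ ℝ^d, define Ŷ = ∑_{i=1}^d (w_inv)_i X_i + ∑_{i=1}^d (w_spu)_i (Y + V_i). Set s = ∑_{i=1}^d (w_spu)_i. Then E[(Y − Ŷ)²] = (1 − s)² + e²·∑_{i=1}^d ((1 − s) − (w_inv)_i)² + e²·∑_{i=1}^d (w_spu)_i². -/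
/-!
The residual `Y - Ŷ` is the linear combination
`∑ ((1 - s) - w_inv i) X_i - ∑ w_spu i V_i + (1 - s) U` of the centred, pairwise independent
variables, so its second moment is its variance, the sum of the squared coefficients times
the variances.
-/

open MeasureTheory ProbabilityTheory

section

variable {Ω ι : Type*} [MeasurableSpace Ω] {P : Measure Ω} [Fintype ι] {Z : ι → Ω → ℝ}

lemma variance_sum_const_mul [IsFiniteMeasure P] (c : ι → ℝ) (hL2 : ∀ i, MemLp (Z i) 2 P)
    (hindep : ∀ i j, i ≠ j → IndepFun (Z i) (Z j) P) :
    variance (fun ω => ∑ i, c i * Z i ω) P = ∑ i, c i ^ 2 * variance (Z i) P := by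
  have hsum : (fun ω => ∑ i, c i * Z i ω) = ∑ i, fun ω => c i * Z i ω := by
    ext ω; simp
  rw [hsum, IndepFun.variance_sum (fun i _ => (hL2 i).const_mul (c i))
    (fun i _ j _ hij => (hindep i j hij).comp (measurable_const_mul (c i))
      (measurable_const_mul (c j)))]
  simp only [variance_const_mul]

lemma integral_sq_sum_const_mul [IsFiniteMeasure P] (c : ι → ℝ)
    (hL2 : ∀ i, MemLp (Z i) 2 P) (hindep : ∀ i j, i ≠ j → IndepFun (Z i) (Z j) P)
    (hmean : ∀ i, ∫ ω, Z i ω ∂P = 0) :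
    ∫ ω, (∑ i, c i * Z i ω) ^ 2 ∂P = ∑ i, c i ^ 2 * variance (Z i) P := by
  have hsum_mean : ∫ ω, ∑ i, c i * Z i ω ∂P = 0 := by
    rw [integral_finsetSum _ fun i _ => ((hL2 i).integrable one_le_two).const_mul (c i)]
    simp [integral_const_mul, hmean]
  have hsum_meas : AEMeasurable (fun ω => ∑ i, c i * Z i ω) P :=
    Finset.aemeasurable_fun_sum _ fun i _ =>
      (hL2 i).aestronglyMeasurable.aemeasurable.const_mul (c i)
  rw [← variance_of_integral_eq_zero hsum_meas hsum_mean, variance_sum_const_mul c hL2 hindep]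

end

lemma sub_linear_estimate_eq {ι : Type*} [Fintype ι] (x v w_inv w_spu : ι → ℝ) (u : ℝ) :
    (∑ i, x i) + u - ((∑ i, w_inv i * x i) + ∑ i, w_spu i * ((∑ i, x i) + u + v i))
      = ∑ i, ((1 - ∑ j, w_spu j) - w_inv i) * x i
        + (∑ i, -w_spu i * v i + (1 - ∑ j, w_spu j) * u) := by
  simp only [sub_mul, neg_mul, mul_add, Finset.sum_add_distrib, Finset.sum_sub_distrib,
    Finset.sum_neg_distrib, ← Finset.sum_mul, ← Finset.mul_sum]
  ring

theorem stmt_11_general {Ω : Type*} [MeasurableSpace Ω] (P : Measure Ω) [IsProbabilityMeasure P]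
    (d : ℕ) (e : ℝ)
    (X V : Fin d → Ω → ℝ) (U : Ω → ℝ)
    (Z : (Fin d ⊕ Fin d ⊕ Unit) → Ω → ℝ)
    (hZ : Z = Sum.elim X (Sum.elim V (fun _ => U)))
    (hL2 : ∀ i, MemLp (Z i) 2 P)
    (hindep : ∀ i j, i ≠ j → IndepFun (Z i) (Z j) P)
    (hmean : ∀ i, ∫ ω, Z i ω ∂P = 0)
    (hvarX : ∀ i, variance (X i) P = e ^ 2)
    (hvarV : ∀ i, variance (V i) P = e ^ 2)
    (hvarU : variance U P = 1)
    (w_inv w_spu : Fin d → ℝ)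
    (Y : Ω → ℝ) (hY : Y = fun ω => (∑ i, X i ω) + U ω)
    (Yhat : Ω → ℝ)
    (hYhat : Yhat = fun ω => (∑ i, w_inv i * X i ω) + ∑ i, w_spu i * (Y ω + V i ω))
    (s : ℝ) (hs : s = ∑ i, w_spu i) :
    ∫ ω, (Y ω - Yhat ω) ^ 2 ∂P
      = (1 - s) ^ 2 + e ^ 2 * (∑ i, ((1 - s) - w_inv i) ^ 2)
        + e ^ 2 * ∑ i, (w_spu i) ^ 2 := by
  set c : Fin d ⊕ Fin d ⊕ Unit → ℝ :=
    Sum.elim (fun i => (1 - s) - w_inv i) (Sum.elim (fun i => -w_spu i) (fun _ => 1 - s))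
  have hresidual : ∀ ω, Y ω - Yhat ω = ∑ k, c k * Z k ω := by
    intro ω
    subst hZ hY hYhat hs
    simp only [sub_linear_estimate_eq, c, Fintype.sum_sum_type, Sum.elim_inl, Sum.elim_inr,
      Finset.univ_unique, Finset.sum_singleton]
  simp_rw [hresidual]
  rw [integral_sq_sum_const_mul c hL2 hindep hmean]
  subst hZ
  simp only [c, Fintype.sum_sum_type, Sum.elim_inl, Sum.elim_inr, Finset.univ_unique,
    Finset.sum_singleton, hvarX, hvarV, hvarU, neg_sq, ← Finset.sum_mul]
  ring

/-- Second-moment computation for the SEM of Section 5.1: with pairwise independent,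
mean-zero, square-integrable variables `X_i, V_i, U` of variances `e², e², 1`,
label `Y = ∑ X_i + U` and estimate `Ŷ = w_invᵀX + w_spuᵀ(Y·1 + V)`, the mean squared
error is `(1−s)² + e²∑((1−s) − w_inv i)² + e²∑(w_spu i)²` where `s = ∑ w_spu i`. -/
theorem stmt_11 {Ω : Type*} [MeasurableSpace Ω] (P : Measure Ω) [IsProbabilityMeasure P]
    (d : ℕ) (hd : 1 ≤ d) (e : ℝ) (he : 0 < e)
    (X V : Fin d → Ω → ℝ) (U : Ω → ℝ)
    (Z : (Fin d ⊕ Fin d ⊕ Unit) → Ω → ℝ)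
    (hZ : Z = Sum.elim X (Sum.elim V (fun _ => U)))
    (hmeas : ∀ i, Measurable (Z i))
    (hL2 : ∀ i, MemLp (Z i) 2 P)
    (hindep : ∀ i j, i ≠ j → IndepFun (Z i) (Z j) P)
    (hmean : ∀ i, ∫ ω, Z i ω ∂P = 0)
    (hvarX : ∀ i, variance (X i) P = e ^ 2)
    (hvarV : ∀ i, variance (V i) P = e ^ 2)
    (hvarU : variance U P = 1)
    (w_inv w_spu : Fin d → ℝ)
    (Y : Ω → ℝ) (hY : Y = fun ω => (∑ i, X i ω) + U ω)
    (Yhat : Ω → ℝ)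
    (hYhat : Yhat = fun ω => (∑ i, w_inv i * X i ω) + ∑ i, w_spu i * (Y ω + V i ω))
    (s : ℝ) (hs : s = ∑ i, w_spu i) :
    ∫ ω, (Y ω - Yhat ω) ^ 2 ∂P
      = (1 - s) ^ 2 + e ^ 2 * (∑ i, ((1 - s) - w_inv i) ^ 2)
        + e ^ 2 * ∑ i, (w_spu i) ^ 2 :=
  stmt_11_general P d e X V U Z hZ hL2 hindep hmean hvarX hvarV hvarU w_inv w_spu Y hY Yhat hYhat s
    hs
end

section
/- Let d ≥ 1 and let w_inv, w_spu ∈ ℝ^d. Set s = ∑_{i=1}^d (w_spu)_i and define M : ℝ → ℝ by M(e) = (1 − s)² + e²·( ∑_{i=1}^d ((1 − s) − (w_inv)_i)² + ∑_{i=1}^d (w_spu)_i² ). Then for any e₁, e₂ > 0 with e₁ ≠ e₂, the following are equivalent: (i) M(e₁) = M(e₂); (ii) w_spu = 0 and w_inv = (1, …, 1). Moreover, in that case M(e) = 1 for every e. -/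
/-!
`M(e) = (1 - s)² + e² · V` with `V = envSensitivity w_inv w_spu` a sum of squares independent
of `e`. Since `e₁² ≠ e₂²` for distinct positive `e₁, e₂`, invariance forces `V = 0`, i.e. every
square vanishes: `w_spu = 0`, hence `s = 0`, and then `w_inv = 1`. Conversely these weights give
`s = 0` and `V = 0`, so `M ≡ 1`.
-/

open Finset

theorem Fintype.sum_sq_eq_zero_iff {ι R : Type*} [Fintype ι] [Semiring R] [LinearOrder R]
    [IsStrictOrderedRing R] [ExistsAddOfLE R] (f : ι → R) : ∑ i, f i ^ 2 = 0 ↔ f = 0 := by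
  simp only [sq, sum_mul_self_eq_zero_iff, mem_univ, true_implies, funext_iff, Pi.zero_apply]

theorem add_sq_mul_eq_add_sq_mul_iff {R : Type*} [CommRing R] [LinearOrder R]
    [IsStrictOrderedRing R] {a b : R} (ha : 0 ≤ a) (hb : 0 ≤ b) (hab : a ≠ b) (c A : R) :
    c + a ^ 2 * A = c + b ^ 2 * A ↔ A = 0 := by
  rw [add_right_inj, mul_eq_mul_right_iff, or_iff_right ((sq_eq_sq₀ ha hb).not.mpr hab)]

variable {ι : Type*} [Fintype ι]

def envSensitivity (w_inv w_spu : ι → ℝ) : ℝ :=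
  ∑ i, ((1 - ∑ j, w_spu j) - w_inv i) ^ 2 + ∑ i, w_spu i ^ 2

theorem envSensitivity_eq_zero_iff (w_inv w_spu : ι → ℝ) :
    envSensitivity w_inv w_spu = 0 ↔ w_spu = 0 ∧ w_inv = fun _ => 1 := by
  rw [envSensitivity, add_eq_zero_iff_of_nonneg (by positivity) (by positivity),
    Fintype.sum_sq_eq_zero_iff, Fintype.sum_sq_eq_zero_iff, and_comm]
  refine and_congr_right fun hspu => ?_
  simp only [hspu, Pi.zero_apply, sum_const_zero, sub_zero, funext_iff, sub_eq_zero]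
  exact forall_congr' fun _ => eq_comm

theorem stmt_12_general (d : ℕ) (w_inv w_spu : Fin d → ℝ)
    (s : ℝ) (hs : s = ∑ i, w_spu i)
    (M : ℝ → ℝ)
    (hM : M = fun e : ℝ =>
      (1 - s) ^ 2 + e ^ 2 * ((∑ i, ((1 - s) - w_inv i) ^ 2) + ∑ i, (w_spu i) ^ 2))
    (e₁ e₂ : ℝ) (h1 : 0 < e₁) (h2 : 0 < e₂) (hne : e₁ ≠ e₂) :
    (M e₁ = M e₂ ↔ (w_spu = 0 ∧ w_inv = fun _ => 1)) ∧
      ((w_spu = 0 ∧ w_inv = fun _ => 1) → ∀ e : ℝ, M e = 1) := by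
  have hM_eq : ∀ e, M e = (1 - s) ^ 2 + e ^ 2 * envSensitivity w_inv w_spu := by
    intro e
    rw [hM, hs, envSensitivity]
  refine ⟨?_, fun hw e => ?_⟩
  · rw [hM_eq, hM_eq, add_sq_mul_eq_add_sq_mul_iff h1.le h2.le hne,
      envSensitivity_eq_zero_iff]
  · have hs0 : s = 0 := by simp [hs, hw.1]
    rw [hM_eq, (envSensitivity_eq_zero_iff w_inv w_spu).mpr hw, hs0]
    norm_num

/-- Invariance characterization for the SEM of Section 5.1: the mean squared error
`M(e) = (1−s)² + e²(∑((1−s) − w_inv i)² + ∑(w_spu i)²)` agrees at two distinct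
environments `e₁ ≠ e₂ > 0` if and only if `w_spu = 0` and `w_inv = (1,…,1)`,
in which case `M(e) = 1` for every `e`. -/
theorem stmt_12 (d : ℕ) (hd : 1 ≤ d) (w_inv w_spu : Fin d → ℝ)
    (s : ℝ) (hs : s = ∑ i, w_spu i)
    (M : ℝ → ℝ)
    (hM : M = fun e : ℝ =>
      (1 - s) ^ 2 + e ^ 2 * ((∑ i, ((1 - s) - w_inv i) ^ 2) + ∑ i, (w_spu i) ^ 2))
    (e₁ e₂ : ℝ) (h1 : 0 < e₁) (h2 : 0 < e₂) (hne : e₁ ≠ e₂) :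
    (M e₁ = M e₂ ↔ (w_spu = 0 ∧ w_inv = fun _ => 1)) ∧
      ((w_spu = 0 ∧ w_inv = fun _ => 1) → ∀ e : ℝ, M e = 1) :=
  stmt_12_general d w_inv w_spu s hs M hM e₁ e₂ h1 h2 hne
end
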